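/- Let p be an odd prime. For all integers a and b, p divides the determinant of M₁(a,b) if and only if p divides 8ab + 2b − 1. -/

import Mathlib

open Matrix

def M1 (a b : ℤ) : Matrix (Fin 6) (Fin 6) ℤ :=
  !![-2*a,    1,    0,    0,    0,    0;
        1,    2,   -1,    0,    0,    0;
        0,   -1, -2*b,    1,    0,    0;
        0,    0,    1,   -2,   -1,    0;
        0,    0,    0,   -1,  2*a,    1;
        0,    0,    0,    0,    1,  2*b]

theorem det_M1 (a b : ℤ) : (M1 a b).det = -(8 * a * b + 2 * b - 1) ^ 2 := by
  simp [M1, det_succ_row_zero, Fin.sum_univ_succ, Fin.succAbove]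
  ring

theorem prime_dvd_det_M1_iff_general (p : ℕ) (hp : p.Prime) (a b : ℤ) :
    (p : ℤ) ∣ (M1 a b).det ↔ (p : ℤ) ∣ (8*a*b + 2*b - 1) := by
  rw [det_M1, dvd_neg, (Nat.prime_iff_prime_int.mp hp).dvd_pow_iff_dvd two_ne_zero]

theorem prime_dvd_det_M1_iff (p : ℕ) (hp : p.Prime) (hodd : Odd p) (a b : ℤ) :
    (p : ℤ) ∣ (M1 a b).det ↔ (p : ℤ) ∣ (8*a*b + 2*b - 1) :=
  prime_dvd_det_M1_iff_general p hp a b
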